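/- Let Γ_0 be a finite nonempty set of formulas over Σ° closed under subformulas, and ν_0 : Γ_0 → {T,t,F} a function such that: (i) ν_0(#β) ∈ #̃ν_0(β) for # ∈ {¬,∘} whenever #β ∈ Γ_0; (ii) ν_0(φ # ψ) ∈ ν_0(φ) #̃ ν_0(ψ) for # ∈ {∧,∨,→} whenever φ # ψ ∈ Γ_0; (iii) if α ∧ ¬α ∈ Γ_0 and ν_0(α) = t then ν_0(α ∧ ¬α) = T. Then there exists a homomorphism ν ∈ F_Cila extending ν_0, i.e., ν(α) = ν_0(α) for every α ∈ Γ_0. -/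
import Mathlib


/-- Formulas over the signature Σ° (¬, ∘ unary; ∧, ∨, → binary). -/
inductive PF : Type
  | var : ℕ → PF
  | neg : PF → PF
  | cons : PF → PF
  | and : PF → PF → PF
  | or : PF → PF → PF
  | imp : PF → PF → PF

/-- The three truth-values `F`, `t`, `T`. -/
inductive V3 : Type
  | F | t | T

/-- ¬̃ of `A_Cila`. -/
def cNeg : V3 → Set V3
  | .F => {V3.T}
  | .t => {V3.t, V3.T}
  | .T => {V3.F}

/-- ∘̃ of `A_Cila`. -/
def cCons : V3 → Set V3
  | .F => {V3.T}
  | .t => {V3.F}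
  | .T => {V3.T}

/-- ∧̃ of `A_Cila`. -/
def cAnd : V3 → V3 → Set V3
  | .F, _ => {V3.F}
  | _, .F => {V3.F}
  | .T, .T => {V3.T}
  | _, _ => {V3.t, V3.T}

/-- ∨̃ of `A_Cila`. -/
def cOr : V3 → V3 → Set V3
  | .F, .F => {V3.F}
  | .F, .T => {V3.T}
  | .T, .F => {V3.T}
  | .T, .T => {V3.T}
  | _, _ => {V3.t, V3.T}

/-- →̃ of `A_Cila`. -/
def cImp : V3 → V3 → Set V3
  | .F, .F => {V3.T}
  | .F, .T => {V3.T}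
  | .t, .F => {V3.F}
  | .T, .F => {V3.F}
  | .T, .T => {V3.T}
  | _, _ => {V3.t, V3.T}

/-- `ν` is a multialgebra homomorphism into `A_Cila`. -/
def IsHomCila (ν : PF → V3) : Prop :=
  (∀ α, ν (PF.neg α) ∈ cNeg (ν α)) ∧
  (∀ α, ν (PF.cons α) ∈ cCons (ν α)) ∧
  (∀ α β, ν (PF.and α β) ∈ cAnd (ν α) (ν β)) ∧
  (∀ α β, ν (PF.or α β) ∈ cOr (ν α) (ν β)) ∧
  (∀ α β, ν (PF.imp α β) ∈ cImp (ν α) (ν β))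

/-- `Γ₀` is closed under (strict) subformulas. -/
def SubfClosed (Γ₀ : Set PF) : Prop :=
  (∀ α, PF.neg α ∈ Γ₀ → α ∈ Γ₀) ∧
  (∀ α, PF.cons α ∈ Γ₀ → α ∈ Γ₀) ∧
  (∀ α β, PF.and α β ∈ Γ₀ → α ∈ Γ₀ ∧ β ∈ Γ₀) ∧
  (∀ α β, PF.or α β ∈ Γ₀ → α ∈ Γ₀ ∧ β ∈ Γ₀) ∧
  (∀ α β, PF.imp α β ∈ Γ₀ → α ∈ Γ₀ ∧ β ∈ Γ₀)


def defNeg : V3 → V3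
  | .F => .T
  | .t => .T
  | .T => .F

def defCons : V3 → V3
  | .F => .T
  | .t => .F
  | .T => .T

def defAnd : V3 → V3 → V3
  | .F, _ => .F
  | _, .F => .F
  | _, _ => .T

def defOr : V3 → V3 → V3
  | .F, .F => .F
  | _, _ => .T

def defImp : V3 → V3 → V3
  | .F, .F => .T
  | _, .F => .F
  | _, _ => .T

lemma defNeg_mem (a : V3) : defNeg a ∈ cNeg a := by
  cases a <;> simp [defNeg, cNeg]

lemma defCons_mem (a : V3) : defCons a ∈ cCons a := by
  cases a <;> simp [defCons, cCons]

lemma defAnd_mem (a b : V3) : defAnd a b ∈ cAnd a b := by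
  cases a <;> cases b <;> simp [defAnd, cAnd]

lemma defOr_mem (a b : V3) : defOr a b ∈ cOr a b := by
  cases a <;> cases b <;> simp [defOr, cOr]

lemma defImp_mem (a b : V3) : defImp a b ∈ cImp a b := by
  cases a <;> cases b <;> simp [defImp, cImp]

open Classical in
noncomputable def extV (Γ₀ : Set PF) (ν₀ : PF → V3) : PF → V3
  | .var n => if PF.var n ∈ Γ₀ then ν₀ (.var n) else .T
  | .neg α => if PF.neg α ∈ Γ₀ then ν₀ (.neg α) else defNeg (extV Γ₀ ν₀ α)
  | .cons α => if PF.cons α ∈ Γ₀ then ν₀ (.cons α) else defCons (extV Γ₀ ν₀ α)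
  | .and α β => if PF.and α β ∈ Γ₀ then ν₀ (.and α β)
      else defAnd (extV Γ₀ ν₀ α) (extV Γ₀ ν₀ β)
  | .or α β => if PF.or α β ∈ Γ₀ then ν₀ (.or α β)
      else defOr (extV Γ₀ ν₀ α) (extV Γ₀ ν₀ β)
  | .imp α β => if PF.imp α β ∈ Γ₀ then ν₀ (.imp α β)
      else defImp (extV Γ₀ ν₀ α) (extV Γ₀ ν₀ β)

/-- Any partial assignment `ν₀` on a finite nonempty
subformula-closed set `Γ₀` respecting the multioperations of `A_Cila` and the
restriction `ν₀(α) = t → ν₀(α ∧ ¬α) = T` extends to a valuation `ν ∈ F_Cila`. -/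
theorem stmt_8 (Γ₀ : Set PF) (hne : Γ₀.Nonempty) (hfin : Γ₀.Finite)
    (hcl : SubfClosed Γ₀) (ν₀ : PF → V3)
    (hneg : ∀ α, PF.neg α ∈ Γ₀ → ν₀ (PF.neg α) ∈ cNeg (ν₀ α))
    (hcons : ∀ α, PF.cons α ∈ Γ₀ → ν₀ (PF.cons α) ∈ cCons (ν₀ α))
    (hand : ∀ α β, PF.and α β ∈ Γ₀ → ν₀ (PF.and α β) ∈ cAnd (ν₀ α) (ν₀ β))
    (hor : ∀ α β, PF.or α β ∈ Γ₀ → ν₀ (PF.or α β) ∈ cOr (ν₀ α) (ν₀ β))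
    (himp : ∀ α β, PF.imp α β ∈ Γ₀ → ν₀ (PF.imp α β) ∈ cImp (ν₀ α) (ν₀ β))
    (hres : ∀ α, PF.and α (PF.neg α) ∈ Γ₀ → ν₀ α = V3.t →
      ν₀ (PF.and α (PF.neg α)) = V3.T) :
    ∃ ν : PF → V3, IsHomCila ν ∧
      (∀ α, ν α = V3.t → ν (PF.and α (PF.neg α)) = V3.T) ∧
      (∀ α ∈ Γ₀, ν α = ν₀ α) := by

  classical
  set ν := extV Γ₀ ν₀ with hν
  have hmem : ∀ α ∈ Γ₀, ν α = ν₀ α := by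
    intro α hα
    cases α <;> simp [hν, extV, hα]
  obtain ⟨c1, c2, c3, c4, c5⟩ := hcl
  have hhom : IsHomCila ν := by
    refine ⟨?_, ?_, ?_, ?_, ?_⟩
    · intro α
      by_cases h : PF.neg α ∈ Γ₀
      · rw [hmem _ h, hmem _ (c1 _ h)]; exact hneg _ h
      · simp only [hν, extV, if_neg h]; exact defNeg_mem _
    · intro α
      by_cases h : PF.cons α ∈ Γ₀
      · rw [hmem _ h, hmem _ (c2 _ h)]; exact hcons _ h
      · simp only [hν, extV, if_neg h]; exact defCons_mem _
    · intro α β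
      by_cases h : PF.and α β ∈ Γ₀
      · rw [hmem _ h, hmem _ (c3 _ _ h).1, hmem _ (c3 _ _ h).2]; exact hand _ _ h
      · simp only [hν, extV, if_neg h]; exact defAnd_mem _ _
    · intro α β
      by_cases h : PF.or α β ∈ Γ₀
      · rw [hmem _ h, hmem _ (c4 _ _ h).1, hmem _ (c4 _ _ h).2]; exact hor _ _ h
      · simp only [hν, extV, if_neg h]; exact defOr_mem _ _
    · intro α β
      by_cases h : PF.imp α β ∈ Γ₀
      · rw [hmem _ h, hmem _ (c5 _ _ h).1, hmem _ (c5 _ _ h).2]; exact himp _ _ h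
      · simp only [hν, extV, if_neg h]; exact defImp_mem _ _
  refine ⟨ν, hhom, ?_, hmem⟩
  intro α hαt
  by_cases h : PF.and α (PF.neg α) ∈ Γ₀
  · have hα : α ∈ Γ₀ := (c3 _ _ h).1
    rw [hmem _ h]
    exact hres _ h (by rw [← hmem _ hα]; exact hαt)
  · have hn : ν (PF.neg α) ∈ cNeg (ν α) := hhom.1 α
    rw [hαt] at hn
    have hnF : ν (PF.neg α) ≠ V3.F := by
      intro he; rw [he] at hn; simp [cNeg] at hn
    simp only [hν, extV, if_neg h]
    show defAnd (ν α) (ν (PF.neg α)) = V3.T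
    rw [hαt]
    cases hb : ν (PF.neg α) with
    | F => exact absurd hb hnF
    | t => rfl
    | T => rfl
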